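/- arXiv:1809.07973 — 2 statements merged into one kernel-verified Lean document; each statement's English description precedes it below -/
import Mathlib

section
/- The map sending a quadratic polynomial's quotient ring to pairs: if R is a unique factorization domain and f(t) = t^2 - Pt + Q ∈ R[t] factors as (t-θ₁)(t-θ₂) with θ₁, θ₂ ∈ R, θ₁ ≠ θ₂, and d = P^2 - 4Q, then R[t]/(f(t)) is isomorphic as an R-algebra to the subring H_R = {(x,y) ∈ R × R : x ≡ y mod √d} of R × R, via g(t) mod f(t) ↦ (g(θ₁), g(θ₂)). -/
open Polynomial

/-! The kernel of `g ↦ (g(θ₁), g(θ₂))` on `R[X]` is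
generated by `(X - θ₁)(X - θ₂)`, because in a domain a polynomial vanishing at two distinct points
is divisible by both linear factors. Its image is cut out by `θ₁ - θ₂ ∣ x - y`: the congruence
holds for every `g` since `θ₁ - θ₂ ∣ g(θ₁) - g(θ₂)`, and conversely `(x, y)` with
`x - y = c (θ₁ - θ₂)` is the image of `c (X - θ₂) + y`. The first isomorphism theorem concludes. -/

namespace Polynomial

variable {R : Type*} [CommRing R]

noncomputable def evalPair (a b : R) : R[X] →ₐ[R] R × R :=
  (aeval a).prod (aeval b)

@[simp]
theorem evalPair_apply (a b : R) (g : R[X]) : evalPair a b g = (g.eval a, g.eval b) := by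
  simp [evalPair]

theorem mem_range_evalPair_iff (a b : R) (x : R × R) :
    x ∈ (evalPair a b).range ↔ a - b ∣ x.1 - x.2 := by
  constructor
  · rintro ⟨g, rfl⟩
    simpa using sub_dvd_eval_sub a b g
  · rintro ⟨c, hc⟩
    refine ⟨C c * (X - C b) + C x.2, ?_⟩
    simp only [AlgHom.toRingHom_eq_coe, RingHom.coe_coe, evalPair_apply, eval_add, eval_mul,
      eval_C, eval_sub, eval_X, sub_self, mul_zero, zero_add, Prod.ext_iff, and_true]
    linear_combination -hc

theorem mul_X_sub_C_dvd_of_isRoot [IsDomain R] {a b : R} (hab : a ≠ b) {g : R[X]}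
    (ha : g.IsRoot a) (hb : g.IsRoot b) : (X - C a) * (X - C b) ∣ g := by
  obtain ⟨h, rfl⟩ := dvd_iff_isRoot.mpr ha
  have hb' : (b - a) * h.eval b = 0 := by simpa using hb
  have hh : h.IsRoot b := (mul_eq_zero.mp hb').resolve_left (sub_ne_zero.mpr hab.symm)
  exact mul_dvd_mul_left _ (dvd_iff_isRoot.mpr hh)

theorem ker_evalPair [IsDomain R] {a b : R} (hab : a ≠ b) :
    RingHom.ker (evalPair a b) = Ideal.span {(X - C a) * (X - C b)} := by
  ext g
  rw [RingHom.mem_ker, Ideal.mem_span_singleton]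
  constructor
  · intro hg
    simp only [evalPair_apply, Prod.mk_eq_zero] at hg
    exact mul_X_sub_C_dvd_of_isRoot hab hg.1 hg.2
  · rintro ⟨c, rfl⟩
    simp

end Polynomial

theorem laxton_stmt0_general (R : Type*) [CommRing R] [IsDomain R]
    (P Q θ₁ θ₂ : R) (hθ : θ₁ ≠ θ₂)
    (hfact : (X : R[X]) ^ 2 - C P * X + C Q = (X - C θ₁) * (X - C θ₂)) :
    ∃ (H : Subalgebra R (R × R))
      (e : (R[X] ⧸ Ideal.span {(X : R[X]) ^ 2 - C P * X + C Q}) ≃ₐ[R] H),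
      (∀ x : R × R, x ∈ H ↔ θ₁ - θ₂ ∣ x.1 - x.2) ∧
      ∀ g : R[X],
        (e (Ideal.Quotient.mk _ g) : R × R) = (g.eval θ₁, g.eval θ₂) := by
  have hker : Ideal.span {(X : R[X]) ^ 2 - C P * X + C Q} = RingHom.ker (evalPair θ₁ θ₂) := by
    rw [hfact, ker_evalPair hθ]
  exact ⟨(evalPair θ₁ θ₂).range,
    (Ideal.quotientEquivAlgOfEq R hker).trans (Ideal.quotientKerEquivRange _),
    mem_range_evalPair_iff θ₁ θ₂, fun g => evalPair_apply θ₁ θ₂ g⟩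

/-- If `R` is a UFD and `f(t) = t² - Pt + Q` factors as `(t-θ₁)(t-θ₂)` with distinct
`θ₁ θ₂ ∈ R`, then `R[t]/(f)` is `R`-algebra isomorphic to the subalgebra
`H_R = {(x,y) ∈ R × R : √d ∣ x - y}` of `R × R` (where `√d = θ₁ - θ₂`),
via `g mod f ↦ (g(θ₁), g(θ₂))`. -/
theorem laxton_stmt0 (R : Type*) [CommRing R] [IsDomain R] [UniqueFactorizationMonoid R]
    (P Q θ₁ θ₂ : R) (hθ : θ₁ ≠ θ₂)
    (hfact : (X : R[X]) ^ 2 - C P * X + C Q = (X - C θ₁) * (X - C θ₂)) :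
    ∃ (H : Subalgebra R (R × R))
      (e : (R[X] ⧸ Ideal.span {(X : R[X]) ^ 2 - C P * X + C Q}) ≃ₐ[R] H),
      (∀ x : R × R, x ∈ H ↔ θ₁ - θ₂ ∣ x.1 - x.2) ∧
      ∀ g : R[X],
        (e (Ideal.Quotient.mk _ g) : R × R) = (g.eval θ₁, g.eval θ₂) :=
  laxton_stmt0_general R P Q θ₁ θ₂ hθ hfact
end

section
/- Let P, Q ∈ ℤ, p an odd prime with p ∤ Q and D = P² - 4Q, and (F_n) the Lucas sequence. Then the rank r(p) (least positive n with p | F_n) exists and divides p - (D/p), where (D/p) is the Legendre symbol. -/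
/-!
Work in `K = 𝔽_p[X] / (X² - P X + Q)` with `α` the class of `X`. There
`α^(n+1) = F (n+1) α - Q F n`, and `1, α` are independent over `𝔽_p`, so `p ∣ F n` exactly when
`α^n ∈ 𝔽_p`. Since `p ∤ Q`, `α` is a unit, and the rank is the order of `α` in `Kˣ / 𝔽_pˣ`.
Writing `2α = P + s` with `s² = D`, Euler's criterion gives `s^p = (D/p) s`, so the Frobenius
map sends `α` to `α^(D/p)` modulo `𝔽_pˣ`; hence that order divides `p - (D/p)`.
-/

open Polynomial

theorem pow_succ_eq_lucas_mul_sub {A : Type*} [CommRing A] {P Q : ℤ} {F : ℕ → ℤ} (h0 : F 0 = 0)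
    (h1 : F 1 = 1) (hrec : ∀ n, F (n + 2) = P * F (n + 1) - Q * F n) {α : A}
    (hα : α ^ 2 = P * α - Q) (n : ℕ) : α ^ (n + 1) = F (n + 1) * α - Q * F n := by
  induction n with
  | zero => simp [h0, h1]
  | succ n ih =>
    rw [pow_succ, ih, hrec]
    push_cast
    linear_combination (F (n + 1) : A) * hα

theorem two_mul_pow_char_eq_legendreSym {K : Type*} [CommRing K] {p : ℕ} [Fact p.Prime]
    [CharP K p] (hp : p ≠ 2) {P Q : ℤ} {α : K} (hα : α ^ 2 = P * α - Q) :
    2 * α ^ p = P + legendreSym p (P ^ 2 - 4 * Q) * (2 * α - P) := by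
  have hodd : 2 * (p / 2) + 1 = p :=
    Nat.two_mul_div_two_add_one_of_odd ((Fact.out : p.Prime).odd_of_ne_two hp)
  have hfix : ∀ n : ℤ, (n : K) ^ p = n := fun n => by
    rw [← frobenius_def, map_intCast]
  have hε : ((P ^ 2 - 4 * Q : ℤ) : K) ^ (p / 2) = legendreSym p (P ^ 2 - 4 * Q) := by
    simpa only [map_pow, map_intCast] using
      congrArg (ZMod.castHom dvd_rfl K) (legendreSym.eq_pow p (P ^ 2 - 4 * Q)).symm
  have hdisc : (2 * α - P) ^ 2 = ((P ^ 2 - 4 * Q : ℤ) : K) := by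
    push_cast; linear_combination 4 * hα
  calc 2 * α ^ p = (2 * α - P + P) ^ p := by
        rw [sub_add_cancel, mul_pow, ← Int.cast_two, hfix]
    _ = ((2 * α - P) ^ 2) ^ (p / 2) * (2 * α - P) + P := by
        rw [add_pow_char, hfix, ← pow_mul, ← pow_succ, hodd]
    _ = P + legendreSym p (P ^ 2 - 4 * Q) * (2 * α - P) := by
        rw [hdisc, hε]; ring

noncomputable def lucasPoly (k : Type*) [CommRing k] (P Q : ℤ) : k[X] :=
  X ^ 2 - C (P : k) * X + C (Q : k)

namespace AdjoinRoot

variable {k : Type*} [CommRing k] {P Q : ℤ}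

theorem degree_lucasPoly [Nontrivial k] : (lucasPoly k P Q).degree = 2 := by
  unfold lucasPoly; compute_degree!

theorem root_lucasPoly_sq : root (lucasPoly k P Q) ^ 2 = P * root (lucasPoly k P Q) - Q := by
  have h : mk (lucasPoly k P Q) (X ^ 2 - C (P : k) * X + C (Q : k)) = 0 := mk_self
  simp only [map_add, map_sub, map_mul, map_pow, mk_X, map_intCast] at h
  linear_combination h

theorem eq_zero_of_of_mul_root_eq_of [IsDomain k] {a b : k}
    (h : of (lucasPoly k P Q) a * root (lucasPoly k P Q) = of (lucasPoly k P Q) b) : a = 0 := by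
  have hdvd : lucasPoly k P Q ∣ C a * X - C b := by
    rw [← mk_eq_zero, map_sub, map_mul, mk_C, mk_C, mk_X, h, sub_self]
  have hlin : C a * X - C b = 0 := eq_zero_of_dvd_of_degree_lt hdvd <| by
    rw [degree_lucasPoly]
    exact (degree_sub_le _ _).trans_lt
      (max_lt ((degree_C_mul_X_le a).trans_lt (by decide)) (degree_C_le.trans_lt (by decide)))
  simpa using congrArg (coeff · 1) hlin

theorem isUnit_root_lucasPoly (hQ : IsUnit (Q : k)) : IsUnit (root (lucasPoly k P Q)) := by
  refine isUnit_of_mul_isUnit_left (y := P - root (lucasPoly k P Q)) ?_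
  have h : root (lucasPoly k P Q) * (P - root (lucasPoly k P Q)) =
      of (lucasPoly k P Q) (Q : k) := by
    rw [map_intCast]; linear_combination -root_lucasPoly_sq (k := k) (P := P) (Q := Q)
  rw [h]
  exact hQ.map _

theorem lucas_eq_zero_iff_root_pow_mem [IsDomain k] {F : ℕ → ℤ} (h0 : F 0 = 0) (h1 : F 1 = 1)
    (hrec : ∀ n, F (n + 2) = P * F (n + 1) - Q * F n) (n : ℕ) :
    (F n : k) = 0 ↔ root (lucasPoly k P Q) ^ n ∈ Set.range (of (lucasPoly k P Q)) := by
  cases n with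
  | zero => simpa [h0] using ⟨1, map_one _⟩
  | succ n =>
    rw [pow_succ_eq_lucas_mul_sub h0 h1 hrec root_lucasPoly_sq n]
    constructor
    · intro hF
      refine ⟨-(Q * F n : ℤ), ?_⟩
      rw [map_neg, map_intCast, ← map_intCast (of (lucasPoly k P Q)) (F (n + 1)), hF, map_zero]
      push_cast; ring
    · rintro ⟨c, hc⟩
      refine eq_zero_of_of_mul_root_eq_of (P := P) (Q := Q) (b := c + (Q * F n : ℤ)) ?_
      rw [map_add, hc, map_intCast, map_intCast]
      push_cast; ring

end AdjoinRoot

section ScalarUnits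

variable (k A : Type*) [Field k] [CommRing A] [Algebra k A]

def scalarUnits : Subgroup Aˣ := (Units.map (algebraMap k A : k →* A)).range

variable {k A}

theorem val_mem_range_algebraMap_iff [Nontrivial A] {a : Aˣ} :
    (a : A) ∈ Set.range (algebraMap k A) ↔ a ∈ scalarUnits k A := by
  constructor
  · rintro ⟨c, hc⟩
    have hc0 : c ≠ 0 := by
      rintro rfl
      exact a.ne_zero (by rw [← hc, map_zero])
    exact ⟨Units.mk0 c hc0, Units.ext hc⟩
  · rintro ⟨c, rfl⟩
    exact ⟨c, rfl⟩

end ScalarUnits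

theorem legendreSym_trichotomy (p : ℕ) [Fact p.Prime] (a : ℤ) :
    legendreSym p a = 1 ∨ legendreSym p a = 0 ∨ legendreSym p a = -1 := by
  by_cases ha : (a : ZMod p) = 0
  · exact Or.inr (Or.inl ((legendreSym.eq_zero_iff p a).2 ha))
  · rcases legendreSym.eq_one_or_neg_one p ha with h | h <;> simp [h]

theorem mk_pow_char_eq_mk_zpow_legendreSym {p : ℕ} [Fact p.Prime] (hp : p ≠ 2) {K : Type*}
    [CommRing K] [Nontrivial K] [Algebra (ZMod p) K] {P Q : ℤ} (u : Kˣ)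
    (hu : (u : K) ^ 2 = P * u - Q) :
    (u : Kˣ ⧸ scalarUnits (ZMod p) K) ^ p =
      (u : Kˣ ⧸ scalarUnits (ZMod p) K) ^ legendreSym p (P ^ 2 - 4 * Q) := by
  have : CharP K p := charP_of_injective_algebraMap (algebraMap (ZMod p) K).injective p
  have h2p : (2 : ZMod p) ≠ 0 := Ring.two_ne_zero (by rwa [ZMod.ringChar_zmod_n])
  have h2 : IsUnit (2 : K) := by
    simpa only [map_ofNat] using h2p.isUnit.map (algebraMap (ZMod p) K)
  have hfrob := two_mul_pow_char_eq_legendreSym hp hu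
  rw [← QuotientGroup.mk_pow]
  -- the three cases read `α^p = α`, `α^p = P / 2` and `α^p = P - α = Q / α`
  rcases legendreSym_trichotomy p (P ^ 2 - 4 * Q) with hε | hε | hε <;>
    rw [hε] at hfrob ⊢ <;> push_cast at hfrob
  · rw [zpow_one, show u ^ p = u from Units.ext (h2.mul_left_cancel ?_)]
    rw [Units.val_pow_eq_pow_val]
    linear_combination hfrob
  · rw [zpow_zero, QuotientGroup.eq_one_iff, ← val_mem_range_algebraMap_iff]
    have hhalf : 2 * algebraMap (ZMod p) K ((P : ZMod p) / 2) = P := by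
      rw [← map_ofNat (algebraMap (ZMod p) K), ← map_mul, mul_div_cancel₀ _ h2p, map_intCast]
    refine ⟨(P : ZMod p) / 2, h2.mul_left_cancel ?_⟩
    rw [hhalf, Units.val_pow_eq_pow_val]
    linear_combination -hfrob
  · rw [zpow_neg_one, eq_inv_iff_mul_eq_one, ← QuotientGroup.mk_mul,
      QuotientGroup.eq_one_iff, ← val_mem_range_algebraMap_iff]
    refine ⟨Q, h2.mul_left_cancel ?_⟩
    rw [map_intCast, Units.val_mul, Units.val_pow_eq_pow_val]
    linear_combination -(u : K) * hfrob + 2 * hu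

/-- For an odd prime `p` with `p ∤ Q`, the rank `r(p)` of the Lucas sequence (the least
positive `n` with `p ∣ F n`) exists and divides `p - (D/p)`, where `(D/p)` is the
Legendre symbol of `D = P² - 4Q`. -/
theorem laxton_stmt11 (P Q : ℤ) (p : ℕ) (hp : p.Prime) (hodd : p ≠ 2)
    (hQ : ¬ ((p : ℤ) ∣ Q)) (F : ℕ → ℤ) (h0 : F 0 = 0) (h1 : F 1 = 1)
    (hrec : ∀ n : ℕ, F (n + 2) = P * F (n + 1) - Q * F n) :
    ∃ r : ℕ, IsLeast {n : ℕ | 0 < n ∧ (p : ℤ) ∣ F n} r ∧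
      (r : ℤ) ∣ ((p : ℤ) - @legendreSym p ⟨hp⟩ (P ^ 2 - 4 * Q)) := by
  have : Fact p.Prime := ⟨hp⟩
  let K := AdjoinRoot (lucasPoly (ZMod p) P Q)
  have : Nontrivial K := AdjoinRoot.nontrivial _ (by rw [AdjoinRoot.degree_lucasPoly]; decide)
  have hQu : IsUnit (Q : ZMod p) :=
    Ne.isUnit fun h => hQ ((ZMod.intCast_zmod_eq_zero_iff_dvd Q p).1 h)
  obtain ⟨u, hu⟩ := AdjoinRoot.isUnit_root_lucasPoly (P := P) hQu
  let x : Kˣ ⧸ scalarUnits (ZMod p) K := u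
  have hdvd_iff (n : ℕ) : (p : ℤ) ∣ F n ↔ orderOf x ∣ n := by
    rw [← ZMod.intCast_zmod_eq_zero_iff_dvd,
      AdjoinRoot.lucas_eq_zero_iff_root_pow_mem h0 h1 hrec, ← hu, ← Units.val_pow_eq_pow_val,
      ← AdjoinRoot.algebraMap_eq, val_mem_range_algebraMap_iff,
      orderOf_dvd_iff_pow_eq_one, ← QuotientGroup.mk_pow, QuotientGroup.eq_one_iff]
  have horder_dvd : (orderOf x : ℤ) ∣ p - legendreSym p (P ^ 2 - 4 * Q) := by
    rw [orderOf_dvd_iff_zpow_eq_one, zpow_sub, zpow_natCast,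
      mk_pow_char_eq_mk_zpow_legendreSym hodd u (hu ▸ AdjoinRoot.root_lucasPoly_sq),
      mul_inv_cancel]
  have hpos : 0 < orderOf x := by
    refine Nat.pos_of_ne_zero fun hx => ?_
    rw [hx, Nat.cast_zero, zero_dvd_iff, sub_eq_zero] at horder_dvd
    have := hp.two_le
    rcases legendreSym_trichotomy p (P ^ 2 - 4 * Q) with h | h | h <;> omega
  exact ⟨orderOf x, ⟨⟨hpos, (hdvd_iff _).2 dvd_rfl⟩,
    fun n hn => Nat.le_of_dvd hn.1 ((hdvd_iff n).1 hn.2)⟩, horder_dvd⟩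
end
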